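/- Let m ∈ ℝ^N with centered version m̄ and suppose min_{1 ≤ k ≤ N−1} Σ_{j=1}^k m̄_j > 0. Set κ := N^{-1/2} min_{1 ≤ k ≤ N−1} Σ_{j=1}^k m̄_j > 0. Then for every x ∈ ℝ^N with x_1 + ... + x_N = 0, we have − Σ_{k=1}^{N−1} (x_{p_x(k+1)} − x_{p_x(k)}) Σ_{j=1}^k m̄_j ≤ −κ ‖x‖, where ‖·‖ is the Euclidean norm. -/

import Mathlib

open Finset

/-!
The gaps `x_{p(k+1)} - x_{p(k)}` of the sorted coordinates are nonnegative and telescope to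
`max x - min x`; weighting them by prefix sums that are all at least their infimum `μ` gives a
sum of at least `μ (max x - min x)`. Since `x` is centered, `min x ≤ 0 ≤ max x`, so every
`|x_i| ≤ max x - min x` and hence `‖x‖ ≤ √N (max x - min x)`.
-/

theorem Fin.sum_succ_sub_castSucc {M : Type*} [AddCommGroup M] :
    ∀ {n : ℕ} (f : Fin (n + 1) → M),
      ∑ k : Fin n, (f k.succ - f k.castSucc) = f (Fin.last n) - f 0
  | 0, f => by simp
  | n + 1, f => by
    have ih := Fin.sum_succ_sub_castSucc (f ∘ Fin.succ)
    simp only [Function.comp_apply, Fin.succ_castSucc, Fin.succ_last] at ih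
    rw [Fin.sum_univ_succ, ih]
    simp

theorem Monotone.mul_sub_le_sum_succ_sub_castSucc_mul {n : ℕ} {f : Fin (n + 1) → ℝ}
    (hf : Monotone f) {w : Fin n → ℝ} {c : ℝ} (hw : ∀ k, c ≤ w k) :
    c * (f (Fin.last n) - f 0) ≤ ∑ k : Fin n, (f k.succ - f k.castSucc) * w k := by
  rw [← Fin.sum_succ_sub_castSucc, mul_sum]
  refine sum_le_sum fun k _ => ?_
  rw [mul_comm]
  exact mul_le_mul_of_nonneg_left (hw k) (sub_nonneg.2 (hf Fin.castSucc_lt_succ.le))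

theorem abs_le_sub_of_sum_eq_zero {ι α : Type*} [Fintype ι] [AddCommGroup α] [LinearOrder α]
    [IsOrderedAddMonoid α] {x : ι → α} {a b : α} (hx : ∑ i, x i = 0)
    (ha : ∀ i, a ≤ x i) (hb : ∀ i, x i ≤ b) (i : ι) : |x i| ≤ b - a := by
  have ha0 : a ≤ 0 := by
    by_contra! h
    exact (sum_pos (fun i _ => h.trans_le (ha i)) ⟨i, mem_univ i⟩).ne' hx
  have hb0 : 0 ≤ b := by
    by_contra! h
    exact (sum_neg (fun i _ => (hb i).trans_lt h) ⟨i, mem_univ i⟩).ne hx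
  rw [abs_le, neg_sub]
  exact ⟨(sub_le_self a hb0).trans (ha i), (hb i).trans ((le_sub_self_iff b).2 ha0)⟩

theorem EuclideanSpace.norm_le_sqrt_card_mul {ι : Type*} [Fintype ι] {x : EuclideanSpace ℝ ι}
    {c : ℝ} (hx : ∀ i, |x i| ≤ c) : ‖x‖ ≤ √(Fintype.card ι) * c := by
  rcases isEmpty_or_nonempty ι with hι | ⟨⟨i⟩⟩
  · simp [EuclideanSpace.norm_eq]
  have hc : 0 ≤ c := (abs_nonneg _).trans (hx i)
  rw [EuclideanSpace.norm_eq, ← Real.sqrt_sq hc, ← Real.sqrt_mul (Nat.cast_nonneg _)]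
  refine Real.sqrt_le_sqrt ?_
  calc ∑ i, ‖x i‖ ^ 2 ≤ ∑ _i : ι, c ^ 2 := by
        gcongr with i
        rw [Real.norm_eq_abs]
        exact hx i
    _ = Fintype.card ι * c ^ 2 := by simp

theorem drift_upper_estimate_general (n : ℕ)
    (m : Fin (n + 1) → ℝ)
    (hmin : 0 < ⨅ k : Fin n, ∑ j ∈ Finset.Iic k.castSucc,
        (m j - (∑ i, m i) / (n + 1)))
    (x : EuclideanSpace ℝ (Fin (n + 1))) (hx : ∑ i, x i = 0)
    (p : Equiv.Perm (Fin (n + 1)))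
    (hp1 : ∀ i j : Fin (n + 1), i < j → x (p i) ≤ x (p j)) :
    - ∑ k : Fin n, (x (p k.succ) - x (p k.castSucc)) *
        ∑ j ∈ Finset.Iic k.castSucc, (m j - (∑ i, m i) / (n + 1)) ≤
      - ((Real.sqrt (n + 1))⁻¹ *
          ⨅ k : Fin n, ∑ j ∈ Finset.Iic k.castSucc,
            (m j - (∑ i, m i) / (n + 1))) * ‖x‖ := by
  set S : Fin n → ℝ := fun k => ∑ j ∈ Iic k.castSucc, (m j - (∑ i, m i) / (n + 1))
  set μ := ⨅ k, S k
  have hmono : Monotone (x ∘ p) := monotone_iff_forall_lt.2 hp1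
  have hmin_le : ∀ i, x (p 0) ≤ x i := fun i => by
    simpa using hmono (Fin.zero_le (p.symm i))
  have hle_max : ∀ i, x i ≤ x (p (Fin.last n)) := fun i => by
    simpa using hmono (Fin.le_last (p.symm i))
  have hnorm : ‖x‖ ≤ √(n + 1) * (x (p (Fin.last n)) - x (p 0)) := by
    simpa using EuclideanSpace.norm_le_sqrt_card_mul
      (abs_le_sub_of_sum_eq_zero hx hmin_le hle_max)
  have hsum : μ * (x (p (Fin.last n)) - x (p 0)) ≤
      ∑ k : Fin n, (x (p k.succ) - x (p k.castSucc)) * S k :=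
    hmono.mul_sub_le_sum_succ_sub_castSucc_mul fun k => ciInf_le (Set.finite_range S).bddBelow k
  rw [neg_mul, neg_le_neg_iff]
  calc (√(n + 1))⁻¹ * μ * ‖x‖
      ≤ (√(n + 1))⁻¹ * μ * (√(n + 1) * (x (p (Fin.last n)) - x (p 0))) := by
        gcongr
    _ = μ * (x (p (Fin.last n)) - x (p 0)) := by field_simp
    _ ≤ _ := hsum

/-- If the prefix sums of the centered drifts `m̄` are positive, then with
`κ := N^{-1/2} · min_{1≤k≤N−1} Σ_{j=1}^k m̄_j > 0`, for every centered `x ∈ Π`: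
`− Σ_{k=1}^{N−1} (x_{p_x(k+1)} − x_{p_x(k)}) Σ_{j=1}^k m̄_j ≤ −κ‖x‖`.
Here `N = n + 1 ≥ 2` and `‖x‖` is the Euclidean norm. -/
theorem drift_upper_estimate (n : ℕ) (hn : 1 ≤ n)
    (m : Fin (n + 1) → ℝ)
    (hmin : 0 < ⨅ k : Fin n, ∑ j ∈ Finset.Iic k.castSucc,
        (m j - (∑ i, m i) / (n + 1)))
    (x : EuclideanSpace ℝ (Fin (n + 1))) (hx : ∑ i, x i = 0)
    (p : Equiv.Perm (Fin (n + 1)))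
    (hp1 : ∀ i j : Fin (n + 1), i < j → x (p i) ≤ x (p j))
    (hp2 : ∀ i j : Fin (n + 1), i < j → x (p i) = x (p j) → p i < p j) :
    - ∑ k : Fin n, (x (p k.succ) - x (p k.castSucc)) *
        ∑ j ∈ Finset.Iic k.castSucc, (m j - (∑ i, m i) / (n + 1)) ≤
      - ((Real.sqrt (n + 1))⁻¹ *
          ⨅ k : Fin n, ∑ j ∈ Finset.Iic k.castSucc,
            (m j - (∑ i, m i) / (n + 1))) * ‖x‖ :=
  drift_upper_estimate_general n m hmin x hx p hp1
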